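/- arXiv:2603.11449 — 3 statements merged into one kernel-verified Lean document; each statement's English description precedes it below -/
import Mathlib

section
/- For the Gauss hypergeometric function F(a,b;c;x) = Σ_{n≥0} ((a)_n (b)_n / (c)_n) x^n / n!, if Re(c - a - b) > 0 then lim_{x→1⁻} F(a,b;c;x) = Γ(c)Γ(c-a-b)/(Γ(c-a)Γ(c-b)). -/
open Complex Filter

/-- Pochhammer symbol `(a)_n` for complex `a`. -/
noncomputable def poch (a : ℂ) (n : ℕ) : ℂ := ∏ i ∈ Finset.range n, (a + i)

/-- Gauss hypergeometric function `F(a,b;c;x)`. -/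
noncomputable def hypF (a b c x : ℂ) : ℂ :=
  ∑' n : ℕ, poch a n * poch b n / (poch c n * (Nat.factorial n : ℂ)) * x ^ n

section GaussProof
open Finset Topology

noncomputable def hterm (a b c : ℂ) (n : ℕ) : ℂ :=
  poch a n * poch b n / (poch c n * (Nat.factorial n : ℂ))
noncomputable def pochR (x : ℝ) (n : ℕ) : ℝ := ∏ i ∈ Finset.range n, (x + i)


lemma poch_succ (a : ℂ) (n : ℕ) : poch a (n+1) = poch a n * (a + n) := prod_range_succ _ _

lemma poch_succ' (a : ℂ) (n : ℕ) : poch a (n+1) = a * poch (a+1) n := by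
  rw [poch, prod_range_succ', poch]
  simp only [Nat.cast_zero, add_zero]
  rw [mul_comm]
  congr 1
  apply prod_congr rfl
  intro i _
  push_cast; ring

lemma poch_ne_zero {a : ℂ} (ha : ∀ m : ℕ, a ≠ -m) (n : ℕ) : poch a n ≠ 0 := by
  apply prod_ne_zero_iff.2
  intro i _ hzero
  exact ha i (by linear_combination hzero)

lemma ne_neg_nat_of_re {a : ℂ} (ha : 0 < a.re) : ∀ m : ℕ, a ≠ -m := by
  intro m heq
  rw [heq] at ha
  simp at ha
  have : (0:ℝ) ≤ m := Nat.cast_nonneg m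
  linarith

lemma contiguous_term (a b c : ℂ) (hc0 : ∀ m : ℕ, c ≠ -(m:ℂ)) (n : ℕ) :
    c*(c-a-b) * hterm a b c n - (c-a)*(c-b) * hterm a b (c+1) n
      = c*(n:ℂ)*hterm a b c n - c*((n:ℂ)+1)*hterm a b c (n+1) := by
  have hc' : ∀ m : ℕ, c + 1 ≠ -(m:ℂ) := by
    intro m heq
    apply hc0 (m+1)
    push_cast
    linear_combination heq
  have hPc : poch c n ≠ 0 := poch_ne_zero hc0 n
  have hPc1 : poch (c+1) n ≠ 0 := poch_ne_zero hc' n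
  have hcz : c ≠ 0 := by simpa using hc0 0
  have hcn : c + (n:ℂ) ≠ 0 := by
    intro heq; exact hc0 n (by linear_combination heq)
  have hf : (n.factorial : ℂ) ≠ 0 := Nat.cast_ne_zero.2 n.factorial_ne_zero
  have hn1 : ((n:ℂ)+1) ≠ 0 := Nat.cast_add_one_ne_zero n
  have hrel : poch (c+1) n = poch c n * (c + n) / c := by
    rw [eq_div_iff hcz, mul_comm _ c, ← poch_succ', poch_succ]
  rw [hterm, hterm, hterm, poch_succ, poch_succ, poch_succ, Nat.factorial_succ, hrel]
  push_cast
  field_simp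
  ring

lemma gammaSeq_eq (s : ℂ) (n : ℕ) :
    Complex.GammaSeq s n = (n : ℂ) ^ s * n.factorial / poch s (n+1) := rfl

lemma hterm_succ_eq (a b c : ℂ) {n : ℕ} (hn : 1 ≤ n)
    (ha : poch a (n+1) ≠ 0) (hb : poch b (n+1) ≠ 0) (hc : poch c (n+1) ≠ 0) :
    hterm a b c (n+1) = (n : ℂ) ^ (a + b - c) / (n+1) *
      (Complex.GammaSeq c n / (Complex.GammaSeq a n * Complex.GammaSeq b n)) := by
  have hn0 : (n : ℂ) ≠ 0 := Nat.cast_ne_zero.2 (by omega)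
  have hf : (n.factorial : ℂ) ≠ 0 := Nat.cast_ne_zero.2 n.factorial_ne_zero
  have key : (n:ℂ)^(a+b-c) * (n:ℂ)^c = (n:ℂ)^a * (n:ℂ)^b := by
    rw [← cpow_add _ _ hn0, ← cpow_add _ _ hn0]; ring_nf
  have hca : (n:ℂ)^a ≠ 0 := by
    intro hz; exact hn0 ((cpow_eq_zero_iff _ _).1 hz).1
  have hcb : (n:ℂ)^b ≠ 0 := by
    intro hz; exact hn0 ((cpow_eq_zero_iff _ _).1 hz).1
  have hG : ∀ z : ℂ, poch z (n+1) ≠ 0 →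
      Complex.GammaSeq z n ≠ 0 ∧ poch z (n+1) = (n:ℂ)^z * n.factorial / Complex.GammaSeq z n := by
    intro z hz
    have hzz : (n:ℂ)^z ≠ 0 := by
      intro h0; exact hn0 ((cpow_eq_zero_iff _ _).1 h0).1
    have : Complex.GammaSeq z n ≠ 0 := by
      rw [gammaSeq_eq]; exact div_ne_zero (mul_ne_zero hzz hf) hz
    refine ⟨this, ?_⟩
    rw [gammaSeq_eq]
    field_simp
  obtain ⟨hGa, ea⟩ := hG a ha
  obtain ⟨hGb, eb⟩ := hG b hb
  obtain ⟨hGc, ec⟩ := hG c hc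
  rw [hterm, ea, eb, ec, Nat.factorial_succ]
  have hca : (n:ℂ)^a ≠ 0 := by intro hz; exact hn0 ((cpow_eq_zero_iff _ _).1 hz).1
  have hcb : (n:ℂ)^b ≠ 0 := by intro hz; exact hn0 ((cpow_eq_zero_iff _ _).1 hz).1
  have hcc : (n:ℂ)^c ≠ 0 := by intro hz; exact hn0 ((cpow_eq_zero_iff _ _).1 hz).1
  have hn1 : ((n:ℂ)+1) ≠ 0 := Nat.cast_add_one_ne_zero n
  push_cast
  field_simp
  linear_combination -key

lemma poch_eq_zero {m : ℕ} {n : ℕ} (hn : m < n) (a : ℂ) (hma : a = -m) :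
    poch a n = 0 := by
  apply prod_eq_zero (mem_range.2 hn)
  rw [hma]; ring

lemma hterm_eq_zero {a : ℂ} {m : ℕ} (hma : a = -m) (b c : ℂ) {n : ℕ} (hn : m < n) :
    hterm a b c n = 0 := by
  rw [hterm, poch_eq_zero hn a hma, zero_mul, zero_div]

lemma hterm_eq_zero' {b : ℂ} {m : ℕ} (hmb : b = -m) (a c : ℂ) {n : ℕ} (hn : m < n) :
    hterm a b c n = 0 := by
  rw [hterm, poch_eq_zero hn b hmb, mul_zero, zero_div]

lemma norm_cpow_nat {z : ℂ} {n : ℕ} (hn : 1 ≤ n) : ‖(n:ℂ) ^ z‖ = (n:ℝ) ^ z.re := by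
  have hn0 : (0:ℝ) < (n:ℝ) := by exact_mod_cast Nat.pos_of_ne_zero (by omega)
  rw [show ((n:ℕ):ℂ) = (((n:ℝ)):ℂ) by push_cast; rfl, Complex.norm_cpow_eq_rpow_re_of_pos hn0]

lemma norm_hterm_succ_le {a b c : ℂ} (ha : ∀ m : ℕ, a ≠ -m) (hb : ∀ m : ℕ, b ≠ -m)
    (hc : ∀ m : ℕ, c ≠ -m) {C : ℝ}
    (hC : ∀ n : ℕ, ‖Complex.GammaSeq c n / (Complex.GammaSeq a n * Complex.GammaSeq b n)‖ ≤ C)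
    {n : ℕ} (hn : 1 ≤ n) :
    ‖hterm a b c (n+1)‖ ≤ (n:ℝ) ^ ((a+b-c).re - 1) * C := by
  have hn0 : (0:ℝ) < (n:ℝ) := by exact_mod_cast Nat.pos_of_ne_zero (by omega)
  have hC0 : 0 ≤ C := le_trans (norm_nonneg _) (hC 0)
  rw [hterm_succ_eq a b c hn (poch_ne_zero ha _) (poch_ne_zero hb _) (poch_ne_zero hc _),
    norm_mul, norm_div, norm_cpow_nat hn]
  have h2 : ‖((n:ℂ)+1)‖ = (n:ℝ)+1 := by
    rw [show (n:ℂ)+1 = (((n:ℝ)+1 : ℝ):ℂ) by push_cast; rfl, Complex.norm_real,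
      Real.norm_of_nonneg (by linarith)]
  rw [h2]
  calc (n:ℝ) ^ ((a+b-c).re) / ((n:ℝ)+1) *
        ‖Complex.GammaSeq c n / (Complex.GammaSeq a n * Complex.GammaSeq b n)‖
      ≤ (n:ℝ) ^ ((a+b-c).re) / (n:ℝ) * C := by
        apply mul_le_mul _ (hC n) (norm_nonneg _) (by positivity)
        apply div_le_div_of_nonneg_left (Real.rpow_nonneg (le_of_lt hn0) _) hn0 (by linarith)
    _ = (n:ℝ) ^ ((a+b-c).re - 1) * C := by
        rw [Real.rpow_sub hn0, Real.rpow_one]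

theorem summable_hterm {a b c : ℂ} (hc : ∀ n : ℕ, c ≠ -(n : ℂ)) (h : 0 < (c - a - b).re) :
    Summable (hterm a b c) := by
  by_cases hA : ∃ m : ℕ, a = -(m:ℂ)
  · obtain ⟨m, hm⟩ := hA
    apply summable_of_ne_finset_zero (s := Finset.range (m+1))
    intro n hn
    exact hterm_eq_zero hm b c (by simpa using hn)
  by_cases hB : ∃ m : ℕ, b = -(m:ℂ)
  · obtain ⟨m, hm⟩ := hB
    apply summable_of_ne_finset_zero (s := Finset.range (m+1))
    intro n hn
    exact hterm_eq_zero' hm a c (by simpa using hn)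
  push_neg at hA hB
  have hΓ : Complex.Gamma a * Complex.Gamma b ≠ 0 :=
    mul_ne_zero (Complex.Gamma_ne_zero hA) (Complex.Gamma_ne_zero hB)
  have hq : Tendsto (fun n => Complex.GammaSeq c n /
      (Complex.GammaSeq a n * Complex.GammaSeq b n)) atTop
      (𝓝 (Complex.Gamma c / (Complex.Gamma a * Complex.Gamma b))) :=
    (Complex.GammaSeq_tendsto_Gamma c).div
      ((Complex.GammaSeq_tendsto_Gamma a).mul (Complex.GammaSeq_tendsto_Gamma b)) hΓ
  obtain ⟨C, hC⟩ := hq.norm.bddAbove_range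
  simp only [mem_upperBounds, Set.mem_range, forall_exists_index] at hC
  have hC' : ∀ n, ‖Complex.GammaSeq c n / (Complex.GammaSeq a n * Complex.GammaSeq b n)‖ ≤ C :=
    fun n => hC _ n rfl
  rw [← summable_nat_add_iff 2]
  apply Summable.of_norm_bounded (g := fun n => ((n+1:ℕ):ℝ) ^ ((a+b-c).re - 1) * C)
  · have hre : (a+b-c).re - 1 < -1 := by
      have : (a+b-c).re = -(c-a-b).re := by simp [Complex.sub_re, Complex.add_re]; ring
      rw [this]; linarith
    have h1 : Summable (fun n : ℕ => (n:ℝ) ^ ((a+b-c).re - 1)) := Real.summable_nat_rpow.2 hre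
    have h2 := (summable_nat_add_iff (f := fun n : ℕ => (n:ℝ) ^ ((a+b-c).re - 1)) 1).2 h1
    exact h2.mul_right C
  · intro n
    exact norm_hterm_succ_le hA hB (fun m => hc m) hC' (by omega)

theorem tendsto_mul_hterm {a b c : ℂ} (hc : ∀ n : ℕ, c ≠ -(n : ℂ)) (h : 0 < (c - a - b).re) :
    Tendsto (fun n : ℕ => (n:ℂ) * hterm a b c n) atTop (𝓝 0) := by
  by_cases hA : ∃ m : ℕ, a = -(m:ℂ)
  · obtain ⟨m, hm⟩ := hA
    apply Tendsto.congr' (f₁ := fun _ => (0:ℂ)) _ tendsto_const_nhds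
    filter_upwards [eventually_ge_atTop (m+1)] with n hn
    rw [hterm_eq_zero hm b c (by omega), mul_zero]
  by_cases hB : ∃ m : ℕ, b = -(m:ℂ)
  · obtain ⟨m, hm⟩ := hB
    apply Tendsto.congr' (f₁ := fun _ => (0:ℂ)) _ tendsto_const_nhds
    filter_upwards [eventually_ge_atTop (m+1)] with n hn
    rw [hterm_eq_zero' hm a c (by omega), mul_zero]
  push_neg at hA hB
  have hΓ : Complex.Gamma a * Complex.Gamma b ≠ 0 :=
    mul_ne_zero (Complex.Gamma_ne_zero hA) (Complex.Gamma_ne_zero hB)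
  have hq : Tendsto (fun n => Complex.GammaSeq c n /
      (Complex.GammaSeq a n * Complex.GammaSeq b n)) atTop
      (𝓝 (Complex.Gamma c / (Complex.Gamma a * Complex.Gamma b))) :=
    (Complex.GammaSeq_tendsto_Gamma c).div
      ((Complex.GammaSeq_tendsto_Gamma a).mul (Complex.GammaSeq_tendsto_Gamma b)) hΓ
  rw [← tendsto_add_atTop_iff_nat 1]
  apply squeeze_zero_norm' (a := fun n : ℕ => (n:ℝ) ^ ((a+b-c).re) *
    ‖Complex.GammaSeq c n / (Complex.GammaSeq a n * Complex.GammaSeq b n)‖)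
  · filter_upwards [eventually_ge_atTop 1] with n hn
    have e := hterm_succ_eq a b c hn (poch_ne_zero hA _) (poch_ne_zero hB _)
      (poch_ne_zero (fun m => hc m) _)
    have hn1 : ((n:ℂ)+1) ≠ 0 := Nat.cast_add_one_ne_zero n
    have : ((n+1:ℕ):ℂ) * hterm a b c (n+1) = (n:ℂ) ^ (a+b-c) *
        (Complex.GammaSeq c n / (Complex.GammaSeq a n * Complex.GammaSeq b n)) := by
      rw [e]; push_cast; field_simp
    rw [this, norm_mul, norm_cpow_nat hn]
  · have hre : (a+b-c).re = -(c-a-b).re := by simp [Complex.sub_re, Complex.add_re]; ring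
    have h1 : Tendsto (fun n : ℕ => (n:ℝ) ^ ((a+b-c).re)) atTop (𝓝 0) := by
      rw [hre]
      exact (tendsto_rpow_neg_atTop h).comp tendsto_natCast_atTop_atTop
    have := h1.mul hq.norm
    simpa using this

lemma shift_ne (c : ℂ) (hc : ∀ n : ℕ, c ≠ -(n : ℂ)) (k : ℕ) :
    ∀ n : ℕ, c + k ≠ -(n : ℂ) := by
  intro n heq
  apply hc (n + k)
  push_cast
  linear_combination heq

lemma contiguous (a b c : ℂ) (hc : ∀ m : ℕ, c ≠ -(m:ℂ)) (h : 0 < (c - a - b).re) :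
    c*(c-a-b) * (∑' n, hterm a b c n) = (c-a)*(c-b) * (∑' n, hterm a b (c+1) n) := by
  have hc1 : ∀ m : ℕ, c + 1 ≠ -(m:ℂ) := by
    have := shift_ne c hc 1
    simpa using this
  have h1 : 0 < (c + 1 - a - b).re := by
    have : (c + 1 - a - b).re = (c - a - b).re + 1 := by
      simp [Complex.sub_re, Complex.add_re]; ring
    rw [this]; linarith
  have S := summable_hterm hc h
  have S' := summable_hterm hc1 h1
  have hsum : HasSum (fun n => c*(c-a-b) * hterm a b c n - (c-a)*(c-b) * hterm a b (c+1) n)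
      (c*(c-a-b) * (∑' n, hterm a b c n) - (c-a)*(c-b) * (∑' n, hterm a b (c+1) n)) :=
    (S.hasSum.mul_left _).sub (S'.hasSum.mul_left _)
  have htel : Tendsto (fun n => ∑ i ∈ range n,
      (c*(c-a-b) * hterm a b c i - (c-a)*(c-b) * hterm a b (c+1) i)) atTop (𝓝 0) := by
    have heq : ∀ n, ∑ i ∈ range n,
        (c*(c-a-b) * hterm a b c i - (c-a)*(c-b) * hterm a b (c+1) i)
        = -(c * (n:ℂ) * hterm a b c n) := by
      intro n
      have : ∀ i : ℕ, c*(c-a-b) * hterm a b c i - (c-a)*(c-b) * hterm a b (c+1) i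
          = (fun j : ℕ => c*(j:ℂ)*hterm a b c j) i - (fun j : ℕ => c*(j:ℂ)*hterm a b c j) (i+1) := by
        intro i
        rw [contiguous_term a b c hc i]
        push_cast
        ring
      rw [Finset.sum_congr rfl (fun i _ => this i), Finset.sum_range_sub']
      simp
    rw [funext heq]
    have := (tendsto_mul_hterm hc h).const_mul c
    simp only [mul_zero] at this
    have := this.neg
    simp only [neg_zero] at this
    convert this using 2 with n
    ring
  have := hsum.tendsto_sum_nat
  have h0 := tendsto_nhds_unique this htel
  linear_combination h0

lemma P_succ_eq {a b c : ℂ} (hc : ∀ m : ℕ, c ≠ -(m:ℂ)) (h : 0 < (c - a - b).re)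
    (hca : ∀ m : ℕ, c - a ≠ -(m:ℂ)) (hcb : ∀ m : ℕ, c - b ≠ -(m:ℂ))
    {n : ℕ} (hn : 1 ≤ n) :
    poch (c-a) (n+1) * poch (c-b) (n+1) / (poch c (n+1) * poch (c-a-b) (n+1))
      = Complex.GammaSeq c n * Complex.GammaSeq (c-a-b) n /
        (Complex.GammaSeq (c-a) n * Complex.GammaSeq (c-b) n) := by
  have hn0 : (n : ℂ) ≠ 0 := Nat.cast_ne_zero.2 (by omega)
  have hf : (n.factorial : ℂ) ≠ 0 := Nat.cast_ne_zero.2 n.factorial_ne_zero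
  have key : (n:ℂ)^(c-a) * (n:ℂ)^(c-b) = (n:ℂ)^c * (n:ℂ)^(c-a-b) := by
    rw [← cpow_add _ _ hn0, ← cpow_add _ _ hn0]; ring_nf
  have hG : ∀ z : ℂ, poch z (n+1) ≠ 0 →
      Complex.GammaSeq z n ≠ 0 ∧ poch z (n+1) = (n:ℂ)^z * n.factorial / Complex.GammaSeq z n := by
    intro z hz
    have hzz : (n:ℂ)^z ≠ 0 := by
      intro h0; exact hn0 ((cpow_eq_zero_iff _ _).1 h0).1
    have : Complex.GammaSeq z n ≠ 0 := by
      rw [gammaSeq_eq]; exact div_ne_zero (mul_ne_zero hzz hf) hz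
    refine ⟨this, ?_⟩
    rw [gammaSeq_eq]
    field_simp
  obtain ⟨h1, e1⟩ := hG (c-a) (poch_ne_zero hca _)
  obtain ⟨h2, e2⟩ := hG (c-b) (poch_ne_zero hcb _)
  obtain ⟨h3, e3⟩ := hG c (poch_ne_zero hc _)
  obtain ⟨h4, e4⟩ := hG (c-a-b) (poch_ne_zero (ne_neg_nat_of_re h) _)
  have hx1 : (n:ℂ)^(c-a) ≠ 0 := by intro h0; exact hn0 ((cpow_eq_zero_iff _ _).1 h0).1
  have hx2 : (n:ℂ)^(c-b) ≠ 0 := by intro h0; exact hn0 ((cpow_eq_zero_iff _ _).1 h0).1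
  have hx3 : (n:ℂ)^c ≠ 0 := by intro h0; exact hn0 ((cpow_eq_zero_iff _ _).1 h0).1
  have hx4 : (n:ℂ)^(c-a-b) ≠ 0 := by intro h0; exact hn0 ((cpow_eq_zero_iff _ _).1 h0).1
  rw [e1, e2, e3, e4]
  field_simp
  linear_combination key

lemma tendsto_P {a b c : ℂ} (hc : ∀ m : ℕ, c ≠ -(m:ℂ)) (h : 0 < (c - a - b).re) :
    Tendsto (fun n : ℕ => poch (c-a) n * poch (c-b) n / (poch c n * poch (c-a-b) n)) atTop
      (𝓝 (Complex.Gamma c * Complex.Gamma (c-a-b) /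
        (Complex.Gamma (c-a) * Complex.Gamma (c-b)))) := by
  by_cases hA : ∃ m : ℕ, c - a = -(m:ℂ)
  · obtain ⟨m, hm⟩ := hA
    have hQ : Complex.Gamma c * Complex.Gamma (c-a-b) /
        (Complex.Gamma (c-a) * Complex.Gamma (c-b)) = 0 := by
      rw [hm, Complex.Gamma_neg_nat_eq_zero, zero_mul, div_zero]
    rw [hQ]
    apply Tendsto.congr' (f₁ := fun _ => (0:ℂ)) _ tendsto_const_nhds
    filter_upwards [eventually_ge_atTop (m+1)] with n hn
    rw [poch_eq_zero (by omega) _ hm, zero_mul, zero_div]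
  by_cases hB : ∃ m : ℕ, c - b = -(m:ℂ)
  · obtain ⟨m, hm⟩ := hB
    have hQ : Complex.Gamma c * Complex.Gamma (c-a-b) /
        (Complex.Gamma (c-a) * Complex.Gamma (c-b)) = 0 := by
      rw [hm, Complex.Gamma_neg_nat_eq_zero, mul_zero, div_zero]
    rw [hQ]
    apply Tendsto.congr' (f₁ := fun _ => (0:ℂ)) _ tendsto_const_nhds
    filter_upwards [eventually_ge_atTop (m+1)] with n hn
    rw [poch_eq_zero (by omega) _ hm, mul_zero, zero_div]
  push_neg at hA hB
  have hΓ : Complex.Gamma (c-a) * Complex.Gamma (c-b) ≠ 0 :=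
    mul_ne_zero (Complex.Gamma_ne_zero hA) (Complex.Gamma_ne_zero hB)
  have hq : Tendsto (fun n => Complex.GammaSeq c n * Complex.GammaSeq (c-a-b) n /
      (Complex.GammaSeq (c-a) n * Complex.GammaSeq (c-b) n)) atTop
      (𝓝 (Complex.Gamma c * Complex.Gamma (c-a-b) /
        (Complex.Gamma (c-a) * Complex.Gamma (c-b)))) :=
    ((Complex.GammaSeq_tendsto_Gamma c).mul (Complex.GammaSeq_tendsto_Gamma (c-a-b))).div
      ((Complex.GammaSeq_tendsto_Gamma (c-a)).mul (Complex.GammaSeq_tendsto_Gamma (c-b))) hΓ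
  rw [← tendsto_add_atTop_iff_nat 1]
  apply Tendsto.congr' _ hq
  filter_upwards [eventually_ge_atTop 1] with n hn
  exact (P_succ_eq hc h hA hB hn).symm

lemma re_shift (c : ℂ) (n : ℕ) : (c + n - a - b).re = (c - a - b).re + n := by
  simp [Complex.sub_re, Complex.add_re]; ring

lemma iterate_contiguous (a b c : ℂ) (hc : ∀ m : ℕ, c ≠ -(m:ℂ)) (h : 0 < (c - a - b).re) :
    ∀ n : ℕ, (∑' m, hterm a b c m) =
      (poch (c-a) n * poch (c-b) n / (poch c n * poch (c-a-b) n)) *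
        (∑' m, hterm a b (c + n) m) := by
  intro n
  induction n with
  | zero => simp [poch]
  | succ n ih =>
    have hcn : ∀ m : ℕ, c + (n:ℂ) ≠ -(m:ℂ) := shift_ne c hc n
    have hren : 0 < (c + (n:ℂ) - a - b).re := by
      rw [re_shift]
      have : (0:ℝ) ≤ n := Nat.cast_nonneg n
      linarith
    have hcont := contiguous a b (c + (n:ℂ)) hcn hren
    have hne1 : (c + (n:ℂ)) ≠ 0 := by simpa using hcn 0
    have hne2 : (c + (n:ℂ) - a - b) ≠ 0 := by
      intro heq
      rw [heq] at hren
      simp at hren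
    have hT : (∑' m, hterm a b (c + (n:ℂ)) m) =
        ((c + n - a)*(c + n - b)/((c + n)*(c + n - a - b))) *
          (∑' m, hterm a b (c + ((n:ℕ)+1:ℕ)) m) := by
      have hcast : c + (n:ℂ) + 1 = c + (((n:ℕ)+1:ℕ):ℂ) := by push_cast; ring
      rw [← hcast]
      field_simp
      linear_combination hcont
    rw [ih, hT, ← mul_assoc]
    congr 1
    rw [poch_succ, poch_succ, poch_succ, poch_succ]
    have hPc : poch c n ≠ 0 := poch_ne_zero hc n
    have hPw : poch (c-a-b) n ≠ 0 := poch_ne_zero (ne_neg_nat_of_re h) n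
    have hne3 : (c - a - b + (n:ℂ)) ≠ 0 := by
      intro heq
      apply ne_neg_nat_of_re h n
      linear_combination heq
    field_simp
    ring

lemma pochR_pos {x : ℝ} (hx : 0 < x) (n : ℕ) : 0 < pochR x n := by
  apply prod_pos; intro i _; positivity

lemma pochR_nonneg {x : ℝ} (hx : 0 ≤ x) (n : ℕ) : 0 ≤ pochR x n := by
  apply prod_nonneg; intro i _; positivity

lemma pochR_cast (x : ℝ) (n : ℕ) : ((pochR x n : ℝ) : ℂ) = poch (x : ℂ) n := by
  rw [pochR, poch]; push_cast; rfl

lemma norm_poch_le (z : ℂ) (n : ℕ) : ‖poch z n‖ ≤ pochR ‖z‖ n := by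
  rw [poch, norm_prod]
  apply Finset.prod_le_prod (fun i _ => norm_nonneg _)
  intro i _
  calc ‖z + (i:ℂ)‖ ≤ ‖z‖ + ‖(i:ℂ)‖ := norm_add_le _ _
    _ = ‖z‖ + i := by rw [Complex.norm_natCast]

lemma norm_poch_shift_ge (c : ℂ) (n : ℕ) (hn : ‖c‖ ≤ (n:ℝ)) (m : ℕ) :
    pochR ((n:ℝ) - ‖c‖) m ≤ ‖poch (c + n) m‖ := by
  rw [poch, norm_prod]
  apply Finset.prod_le_prod
  · intro i _
    have : (0:ℝ) ≤ i := Nat.cast_nonneg i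
    linarith
  · intro i _
    have h1 : ‖((n:ℂ) + i)‖ = (n:ℝ) + i := by
      rw [show (n:ℂ) + i = (((n:ℝ) + i : ℝ) : ℂ) by push_cast; ring, Complex.norm_real,
        Real.norm_of_nonneg (by positivity)]
    calc (n:ℝ) - ‖c‖ + i = ((n:ℝ) + i) - ‖c‖ := by ring
      _ ≤ ‖((n:ℂ) + i)‖ - ‖c‖ := by rw [h1]
      _ ≤ ‖c + (n:ℂ) + i‖ := by
          have := norm_sub_norm_le ((n:ℂ) + i) (-c)
          rw [norm_neg] at this
          have e : (n:ℂ) + i - (-c) = c + (n:ℂ) + i := by ring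
          rw [e] at this
          linarith

lemma pochR_first_factor {x K : ℝ} (hK : 0 < K) (hx : K ≤ x) (m : ℕ) :
    x * pochR K (m+1) ≤ K * pochR x (m+1) := by
  have hx0 : 0 < x := lt_of_lt_of_le hK hx
  have key : ∀ y : ℝ, pochR y (m+1) = y * ∏ i ∈ Finset.range m, (y + 1 + i) := by
    intro y
    rw [pochR, prod_range_succ']
    simp only [Nat.cast_zero, add_zero]
    rw [mul_comm]
    congr 1
    apply prod_congr rfl
    intro i _
    push_cast; ring
  rw [key, key]
  have h2 : ∏ i ∈ Finset.range m, (K + 1 + i) ≤ ∏ i ∈ Finset.range m, (x + 1 + i) := by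
    apply Finset.prod_le_prod
    · intro i _; positivity
    · intro i _
      have : (0:ℝ) ≤ i := Nat.cast_nonneg i
      linarith
  calc x * (K * ∏ i ∈ Finset.range m, (K + 1 + i))
      = K * x * ∏ i ∈ Finset.range m, (K + 1 + i) := by ring
    _ ≤ K * x * ∏ i ∈ Finset.range m, (x + 1 + i) := by
        apply mul_le_mul_of_nonneg_left h2 (by positivity)
    _ = K * (x * ∏ i ∈ Finset.range m, (x + 1 + i)) := by ring

theorem tendsto_shift_one (a b c : ℂ) :
    Tendsto (fun n : ℕ => ∑' m, hterm a b (c + n) m) atTop (𝓝 1) := by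
  have hKa0 : (0:ℝ) ≤ ‖a‖ := norm_nonneg a
  have hKb0 : (0:ℝ) ≤ ‖b‖ := norm_nonneg b
  obtain ⟨K, hKgt⟩ : ∃ K : ℕ, ‖a‖ + ‖b‖ < (K:ℝ) := by
    obtain ⟨K, hK⟩ := exists_nat_gt (‖a‖ + ‖b‖)
    exact ⟨K, hK⟩
  have hK0 : (0:ℝ) < (K:ℝ) := by linarith
  set v : ℕ → ℝ := fun m =>
    pochR ‖a‖ m * pochR ‖b‖ m / (pochR (K:ℝ) m * m.factorial) with hv
  have hvnonneg : ∀ m, 0 ≤ v m := by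
    intro m
    rw [hv]
    have h1 := pochR_pos hK0 m
    have h2 := pochR_nonneg hKa0 m
    have h3 := pochR_nonneg hKb0 m
    positivity
  have hvsum : Summable v := by
    have hcK : ∀ n : ℕ, ((K:ℝ):ℂ) ≠ -(n:ℂ) := by
      apply ne_neg_nat_of_re; simpa using hK0
    have hre : 0 < (((K:ℝ):ℂ) - (‖a‖:ℂ) - (‖b‖:ℂ)).re := by
      have he : (((K:ℝ):ℂ) - (‖a‖:ℂ) - (‖b‖:ℂ)).re = (K:ℝ) - ‖a‖ - ‖b‖ := by
        simp only [Complex.sub_re, Complex.ofReal_re]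
      rw [he]; linarith
    have hs := summable_hterm hcK hre
    have heq : ∀ m, hterm (‖a‖:ℂ) (‖b‖:ℂ) ((K:ℝ):ℂ) m = ((v m : ℝ) : ℂ) := by
      intro m
      rw [hterm, hv, ← pochR_cast, ← pochR_cast, ← pochR_cast]
      push_cast
      rfl
    rw [funext heq] at hs
    exact Complex.summable_ofReal.1 hs
  set C : ℝ := ∑' m, v (m+1) with hC
  have hvshift : Summable (fun m => v (m+1)) := by
    rw [summable_nat_add_iff]; exact hvsum
  have hC0 : 0 ≤ C := tsum_nonneg (fun m => hvnonneg _)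
  have hre_cab : -(‖c‖ + ‖a‖ + ‖b‖) ≤ (c - a - b).re := by
    have h1 := abs_le.1 (Complex.abs_re_le_norm c)
    have h2 := abs_le.1 (Complex.abs_re_le_norm a)
    have h3 := abs_le.1 (Complex.abs_re_le_norm b)
    simp only [Complex.sub_re]
    linarith [h1.1, h2.2, h3.2]
  have hest : ∀ n : ℕ, ‖c‖ + K ≤ (n:ℝ) →
      ‖(∑' m, hterm a b (c + n) m) - 1‖ ≤ (K:ℝ) / ((n:ℝ) - ‖c‖) * C := by
    intro n hn
    have hx0 : (0:ℝ) < (n:ℝ) - ‖c‖ := by linarith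
    have hxK : (K:ℝ) ≤ (n:ℝ) - ‖c‖ := by linarith
    have hnc : ‖c‖ ≤ (n:ℝ) := by linarith
    have hterm_bound : ∀ m : ℕ, ‖hterm a b (c + n) (m+1)‖ ≤ (K:ℝ) / ((n:ℝ) - ‖c‖) * v (m+1) := by
      intro m
      have hpa := pochR_nonneg hKa0 (m+1)
      have hpb := pochR_nonneg hKb0 (m+1)
      have hpx := pochR_pos hx0 (m+1)
      have hpK := pochR_pos hK0 (m+1)
      have hfac : (0:ℝ) < ((m+1).factorial : ℝ) := by positivity
      have hb1 : ‖hterm a b (c + n) (m+1)‖ ≤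
          pochR ‖a‖ (m+1) * pochR ‖b‖ (m+1) / (pochR ((n:ℝ) - ‖c‖) (m+1) * (m+1).factorial) := by
        rw [hterm, norm_div, norm_mul, norm_mul, Complex.norm_natCast]
        apply div_le_div₀ (by positivity)
          (mul_le_mul (norm_poch_le a _) (norm_poch_le b _) (norm_nonneg _)
            (le_trans (norm_nonneg _) (norm_poch_le a _)))
          (by positivity)
        apply mul_le_mul_of_nonneg_right (norm_poch_shift_ge c n hnc _) (by positivity)
      have hb2 : pochR ‖a‖ (m+1) * pochR ‖b‖ (m+1) /
            (pochR ((n:ℝ) - ‖c‖) (m+1) * (m+1).factorial)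
          ≤ (K:ℝ) / ((n:ℝ) - ‖c‖) * v (m+1) := by
        rw [hv]
        rw [div_mul_div_comm, div_le_div_iff₀ (by positivity) (by positivity)]
        have hff := pochR_first_factor hK0 hxK m
        set x : ℝ := (n:ℝ) - ‖c‖
        calc pochR ‖a‖ (m+1) * pochR ‖b‖ (m+1) * (x * (pochR (K:ℝ) (m+1) * ((m+1).factorial:ℝ)))
            = (pochR ‖a‖ (m+1) * pochR ‖b‖ (m+1) * ((m+1).factorial:ℝ)) *
                (x * pochR (K:ℝ) (m+1)) := by ring
          _ ≤ (pochR ‖a‖ (m+1) * pochR ‖b‖ (m+1) * ((m+1).factorial:ℝ)) *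
                ((K:ℝ) * pochR x (m+1)) := by
              apply mul_le_mul_of_nonneg_left hff (by positivity)
          _ = (K:ℝ) * (pochR ‖a‖ (m+1) * pochR ‖b‖ (m+1)) *
                (pochR x (m+1) * ((m+1).factorial:ℝ)) := by ring
      exact le_trans hb1 hb2
    have hnorm_sum : Summable (fun m => ‖hterm a b (c + n) (m+1)‖) := by
      apply Summable.of_nonneg_of_le (fun m => norm_nonneg _) hterm_bound
      exact hvshift.mul_left _
    have hcn : ∀ m : ℕ, c + (n:ℂ) ≠ -(m:ℂ) := by
      intro m heq
      have he2 : c = -(((m+n:ℕ):ℝ):ℂ) := by push_cast; linear_combination heq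
      have : ‖c‖ = ((m+n:ℕ):ℝ) := by
        rw [he2, norm_neg, Complex.norm_real, Real.norm_of_nonneg (by positivity)]
      rw [this] at hn
      push_cast at hn
      have : (0:ℝ) ≤ (m:ℝ) := Nat.cast_nonneg m
      linarith
    have hsummable : Summable (hterm a b (c + (n:ℂ))) := by
      apply summable_hterm hcn
      have he : (c + (n:ℂ) - a - b).re = (c - a - b).re + n := by
        simp [Complex.sub_re, Complex.add_re]; ring
      rw [he]
      linarith [hre_cab]
    have h1 : (∑' m, hterm a b (c + (n:ℂ)) m) = 1 + ∑' m, hterm a b (c + (n:ℂ)) (m+1) := by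
      rw [Summable.tsum_eq_zero_add hsummable]
      congr 1
      simp [hterm, poch]
    rw [h1]
    have e2 : (1 : ℂ) + (∑' m, hterm a b (c + (n:ℂ)) (m+1)) - 1
        = ∑' m, hterm a b (c + (n:ℂ)) (m+1) := by ring
    rw [e2]
    calc ‖∑' m, hterm a b (c + (n:ℂ)) (m+1)‖
        ≤ ∑' m, ‖hterm a b (c + (n:ℂ)) (m+1)‖ := norm_tsum_le_tsum_norm hnorm_sum
      _ ≤ ∑' m, (K:ℝ) / ((n:ℝ) - ‖c‖) * v (m+1) :=
          Summable.tsum_le_tsum hterm_bound hnorm_sum (hvshift.mul_left _)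
      _ = (K:ℝ) / ((n:ℝ) - ‖c‖) * C := tsum_mul_left
  -- conclude by squeezing
  rw [← tendsto_sub_nhds_zero_iff]
  apply squeeze_zero_norm' (a := fun n : ℕ => (K:ℝ) / ((n:ℝ) - ‖c‖) * C)
  · filter_upwards [eventually_ge_atTop (⌈‖c‖ + K⌉₊)] with n hn
    apply hest
    calc ‖c‖ + (K:ℝ) ≤ (⌈‖c‖ + K⌉₊ : ℝ) := Nat.le_ceil _
      _ ≤ (n:ℝ) := Nat.cast_le.2 hn
  · have hdiv : Tendsto (fun n : ℕ => ((K:ℝ) * C) / ((n:ℝ) - ‖c‖)) atTop (𝓝 0) := by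
      apply Tendsto.div_atTop (tendsto_const_nhds)
      exact tendsto_atTop_add_const_right _ (-‖c‖) tendsto_natCast_atTop_atTop
    apply hdiv.congr
    intro n
    ring

theorem stmt0 (a b c : ℂ) (hc : ∀ n : ℕ, c ≠ -(n : ℂ)) (h : 0 < (c - a - b).re) :
    Tendsto (fun x : ℝ => hypF a b c (x : ℂ)) (nhdsWithin 1 (Set.Iio 1))
      (nhds (Complex.Gamma c * Complex.Gamma (c - a - b) /
        (Complex.Gamma (c - a) * Complex.Gamma (c - b)))) := by
  have hTeq : (∑' m, hterm a b c m) = Complex.Gamma c * Complex.Gamma (c - a - b) /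
      (Complex.Gamma (c - a) * Complex.Gamma (c - b)) := by
    have h1 : Tendsto (fun n : ℕ =>
        (poch (c-a) n * poch (c-b) n / (poch c n * poch (c-a-b) n)) *
          (∑' m, hterm a b (c + n) m)) atTop
        (𝓝 ((Complex.Gamma c * Complex.Gamma (c - a - b) /
          (Complex.Gamma (c - a) * Complex.Gamma (c - b))) * 1)) :=
      (tendsto_P hc h).mul (tendsto_shift_one a b c)
    have h2 : Tendsto (fun n : ℕ =>
        (poch (c-a) n * poch (c-b) n / (poch c n * poch (c-a-b) n)) *
          (∑' m, hterm a b (c + n) m)) atTop (𝓝 (∑' m, hterm a b c m)) := by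
      apply Tendsto.congr _ (tendsto_const_nhds (x := ∑' m, hterm a b c m))
      intro n
      exact iterate_contiguous a b c hc h n
    have := tendsto_nhds_unique h2 h1
    rw [this, mul_one]
  have hhs : HasSum (hterm a b c) (Complex.Gamma c * Complex.Gamma (c - a - b) /
      (Complex.Gamma (c - a) * Complex.Gamma (c - b))) := by
    rw [← hTeq]
    exact (summable_hterm hc h).hasSum
  have habel := Complex.tendsto_tsum_powerSeries_nhdsWithin_lt (f := hterm a b c)
    hhs.tendsto_sum_nat
  rw [tendsto_map'_iff] at habel
  exact habel

end GaussProof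
end

section
/- Let r_n and s_n be real sequences with s_n > 0 for all n, such that R(x) = Σ r_n x^n and S(x) = Σ s_n x^n converge for |x| < r with r > 0. If the sequence r_n/s_n is non-constant and monotonically increasing, then x ↦ R(x)/S(x) is strictly increasing on (0, r). -/
lemma abs_summable_of_summable_on (r : ℝ) (f : ℕ → ℝ)
    (hf : ∀ x : ℝ, |x| < r → Summable (fun n => f n * x ^ n))
    {x : ℝ} (hx0 : 0 ≤ x) (hxr : x < r) :
    Summable (fun n => |f n * x ^ n|) := by
  set t := (x + r) / 2 with ht_def
  have hxt : x < t := by rw [ht_def]; linarith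
  have htr : t < r := by rw [ht_def]; linarith
  have ht0 : 0 < t := lt_of_le_of_lt hx0 hxt
  have hs := hf t (by rwa [abs_of_pos ht0])
  have hb : BddAbove (Set.range fun n => |f n * t ^ n|) :=
    (hs.tendsto_atTop_zero.abs).bddAbove_range
  obtain ⟨C, hC⟩ := hb
  have hCmem : ∀ n, |f n * t ^ n| ≤ C := fun n => hC (Set.mem_range_self n)
  have hratio : 0 ≤ x / t := div_nonneg hx0 ht0.le
  have hratio1 : x / t < 1 := (div_lt_one ht0).2 hxt
  have hgeo : Summable (fun n => C * (x / t) ^ n) :=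
    (summable_geometric_of_lt_one hratio hratio1).mul_left C
  apply Summable.of_nonneg_of_le (fun n => abs_nonneg _) _ hgeo
  intro n
  have hxn : x ^ n = t ^ n * (x / t) ^ n := by
    rw [← mul_pow, mul_div_cancel₀ _ (ne_of_gt ht0)]
  calc |f n * x ^ n| = |f n * t ^ n| * (x / t) ^ n := by
        rw [hxn, ← mul_assoc, abs_mul, abs_of_nonneg (pow_nonneg hratio n)]
    _ ≤ C * (x / t) ^ n :=
        mul_le_mul_of_nonneg_right (hCmem n) (pow_nonneg hratio n)

lemma mul_nonneg_of_nonpos_nonpos' {a b : ℝ} (ha : a ≤ 0) (hb : b ≤ 0) : 0 ≤ a * b := by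
  nlinarith

lemma pow_cross_le {x y : ℝ} (hx : 0 ≤ x) (hxy : x ≤ y) {m n : ℕ} (h : m ≤ n) :
    y ^ m * x ^ n ≤ x ^ m * y ^ n := by
  obtain ⟨k, rfl⟩ := Nat.exists_eq_add_of_le h
  have hy : 0 ≤ y := hx.trans hxy
  rw [pow_add, pow_add]
  calc y ^ m * (x ^ m * x ^ k) = x ^ m * y ^ m * x ^ k := by ring
    _ ≤ x ^ m * y ^ m * y ^ k := by
        apply mul_le_mul_of_nonneg_left (pow_le_pow_left₀ hx hxy k)
        positivity
    _ = x ^ m * (y ^ m * y ^ k) := by ring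

lemma pow_cross_lt {x y : ℝ} (hx : 0 < x) (hxy : x < y) {m n : ℕ} (h : m < n) :
    y ^ m * x ^ n < x ^ m * y ^ n := by
  obtain ⟨k, rfl⟩ := Nat.exists_eq_add_of_le h.le
  have hk : k ≠ 0 := by rintro rfl; omega
  rw [pow_add, pow_add]
  have hy : 0 < x := hx
  calc y ^ m * (x ^ m * x ^ k) = x ^ m * y ^ m * x ^ k := by ring
    _ < x ^ m * y ^ m * y ^ k := by
        apply mul_lt_mul_of_pos_left (pow_lt_pow_left₀ hxy hx.le hk)
        exact mul_pos (pow_pos hx m) (pow_pos (hx.trans hxy) m)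
    _ = x ^ m * (y ^ m * y ^ k) := by ring

set_option maxHeartbeats 1600000 in
theorem stmt4 (r : ℝ) (hr : 0 < r) (rs ss : ℕ → ℝ) (hs : ∀ n, 0 < ss n)
    (hR : ∀ x : ℝ, |x| < r → Summable (fun n => rs n * x ^ n))
    (hS : ∀ x : ℝ, |x| < r → Summable (fun n => ss n * x ^ n))
    (hmono : Monotone (fun n => rs n / ss n))
    (hnc : ∃ m n, rs m / ss m ≠ rs n / ss n) :
    StrictMonoOn (fun x => (∑' n : ℕ, rs n * x ^ n) / (∑' n : ℕ, ss n * x ^ n))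
      (Set.Ioo 0 r) := by
  -- cross multiplication lemma for the coefficients
  have hcross : ∀ {m n : ℕ}, m ≤ n → rs m * ss n ≤ rs n * ss m := by
    intro m n h
    have := hmono h
    simp only at this
    rwa [div_le_div_iff₀ (hs m) (hs n)] at this
  intro x hx y hy hxy
  obtain ⟨hx0, hxr⟩ := hx
  obtain ⟨hy0, hyr⟩ := hy
  -- absolute summability
  have hRx := abs_summable_of_summable_on r rs hR hx0.le hxr
  have hRy := abs_summable_of_summable_on r rs hR hy0.le hyr
  have hSx := abs_summable_of_summable_on r ss hS hx0.le hxr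
  have hSy := abs_summable_of_summable_on r ss hS hy0.le hyr
  have habs : ∀ x' : ℝ, |x'| < r → |x'| = x' →
      x' = x' := fun _ _ h => rfl
  have hxabs : |x| < r := by rwa [abs_of_pos hx0]
  have hyabs : |y| < r := by rwa [abs_of_pos hy0]
  -- positivity of S
  have hSxpos : 0 < ∑' n, ss n * x ^ n := by
    apply Summable.tsum_pos (hS x hxabs) (fun n => mul_nonneg (hs n).le (pow_nonneg hx0.le n)) 0
    simpa using hs 0
  have hSypos : 0 < ∑' n, ss n * y ^ n := by
    apply Summable.tsum_pos (hS y hyabs) (fun n => mul_nonneg (hs n).le (pow_nonneg hy0.le n)) 0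
    simpa using hs 0
  simp only
  rw [div_lt_div_iff₀ hSxpos hSypos]
  -- express products as double sums
  have hnorm : ∀ (f : ℕ → ℝ) (z : ℝ), (fun n => ‖f n * z ^ n‖) = fun n => |f n * z ^ n| :=
    fun f z => rfl
  have h1 : (∑' n, rs n * x ^ n) * (∑' n, ss n * y ^ n)
      = ∑' p : ℕ × ℕ, (rs p.1 * x ^ p.1) * (ss p.2 * y ^ p.2) :=
    tsum_mul_tsum_of_summable_norm hRx hSy
  have h2 : (∑' n, rs n * y ^ n) * (∑' n, ss n * x ^ n)
      = ∑' p : ℕ × ℕ, (rs p.1 * y ^ p.1) * (ss p.2 * x ^ p.2) :=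
    tsum_mul_tsum_of_summable_norm hRy hSx
  rw [h1, h2]
  -- summability of double families
  have hsum1 : Summable (fun p : ℕ × ℕ => (rs p.1 * x ^ p.1) * (ss p.2 * y ^ p.2)) :=
    summable_mul_of_summable_norm (f := fun n => rs n * x ^ n) (g := fun n => ss n * y ^ n) hRx hSy
  have hsum2 : Summable (fun p : ℕ × ℕ => (rs p.1 * y ^ p.1) * (ss p.2 * x ^ p.2)) :=
    summable_mul_of_summable_norm (f := fun n => rs n * y ^ n) (g := fun n => ss n * x ^ n) hRy hSx
  rw [← sub_pos, ← Summable.tsum_sub hsum2 hsum1]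
  set F : ℕ × ℕ → ℝ := fun p =>
    rs p.1 * y ^ p.1 * (ss p.2 * x ^ p.2) - rs p.1 * x ^ p.1 * (ss p.2 * y ^ p.2) with hF
  have hFsum : Summable F := hsum2.sub hsum1
  -- symmetrize
  have hswap : Summable (fun p : ℕ × ℕ => F p.swap) :=
    ((Equiv.prodComm ℕ ℕ).summable_iff).2 hFsum
  have hswap_eq : ∑' p : ℕ × ℕ, F p.swap = ∑' p : ℕ × ℕ, F p :=
    (Equiv.prodComm ℕ ℕ).tsum_eq F
  have hdouble : (2 : ℝ) * ∑' p : ℕ × ℕ, F p = ∑' p : ℕ × ℕ, (F p + F p.swap) := by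
    rw [Summable.tsum_add hFsum hswap, hswap_eq]; ring
  -- nonnegativity of the symmetrized terms
  have hGnonneg : ∀ p : ℕ × ℕ, 0 ≤ F p + F p.swap := by
    intro ⟨m, n⟩
    have hGeq : F (m, n) + F (m, n).swap
        = (rs m * ss n - rs n * ss m) * (y ^ m * x ^ n - x ^ m * y ^ n) := by
      simp only [hF, Prod.swap]; ring
    rw [hGeq]
    rcases le_total m n with h | h
    · exact mul_nonneg_of_nonpos_nonpos' (by linarith [hcross h])
        (by linarith [pow_cross_le hx0.le hxy.le h])
    · apply mul_nonneg
      · linarith [hcross h]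
      · linarith [pow_cross_le hx0.le hxy.le h]
  -- strict positivity at one term
  obtain ⟨m, n, hmn⟩ := hnc
  -- WLOG m < n with strict ratio increase
  have hwit : ∃ a b : ℕ, b < a ∧ rs b / ss b < rs a / ss a := by
    rcases lt_trichotomy m n with h | h | h
    · exact ⟨n, m, h, lt_of_le_of_ne (hmono h.le) hmn⟩
    · exact absurd (by rw [h]) hmn
    · exact ⟨m, n, h, lt_of_le_of_ne (hmono h.le) (Ne.symm hmn)⟩
  obtain ⟨a, b, hba, hlt⟩ := hwit
  have hpos_term : 0 < F (a, b) + F (a, b).swap := by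
    have hGeq : F (a, b) + F (a, b).swap
        = (rs a * ss b - rs b * ss a) * (y ^ a * x ^ b - x ^ a * y ^ b) := by
      simp only [hF, Prod.swap]; ring
    rw [hGeq]
    apply mul_pos
    · rw [div_lt_div_iff₀ (hs b) (hs a)] at hlt
      linarith
    · -- y^a x^b - x^a y^b > 0 since b < a
      have := pow_cross_lt hx0 hxy hba
      -- this : y ^ b * x ^ a < x ^ b * y ^ a
      linarith [pow_cross_lt hx0 hxy hba]
  have hGsum : Summable (fun p : ℕ × ℕ => F p + F p.swap) := hFsum.add hswap
  have : 0 < ∑' p : ℕ × ℕ, (F p + F p.swap) :=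
    Summable.tsum_pos hGsum hGnonneg (a, b) hpos_term
  linarith [hdouble ▸ this]
end

section
/- Let α, β ∈ ℂ and z ∈ 𝔻 (the open unit disk). Then |(1-|z|²)^{α+β+1} / ((1-z)^{α+1}(1-z̄)^{β+1})| ≤ exp((π/2)|Im(α-β)|) · (1-|z|²)^{Re(α+β)+1} / |1-z|^{Re(α+β)+2}. -/
open Complex Real

theorem stmt5 (α β : ℂ) (z : ℂ) (hz : ‖z‖ < 1) :
    ‖((1 - ‖z‖ ^ 2 : ℝ) : ℂ) ^ (α + β + 1) /
        ((1 - z) ^ (α + 1) * (1 - (starRingEnd ℂ) z) ^ (β + 1))‖ ≤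
      Real.exp (π / 2 * |(α - β).im|) *
        (1 - ‖z‖ ^ 2) ^ ((α + β).re + 1) /
          ‖1 - z‖ ^ ((α + β).re + 2) := by
  have hr : (0:ℝ) < 1 - ‖z‖ ^ 2 := by nlinarith [norm_nonneg z]
  have hzre : 0 < (1 - z).re := by
    have h1 := Complex.abs_re_le_norm z
    have h2 : z.re ≤ ‖z‖ := (le_abs_self _).trans h1
    simp only [Complex.sub_re, Complex.one_re]
    linarith
  have hz0 : (1 - z) ≠ 0 := fun h => by rw [h] at hzre; simp at hzre
  have hc : 1 - (starRingEnd ℂ) z = (starRingEnd ℂ) (1 - z) := by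
    simp [map_sub]
  have habs : |Complex.arg (1 - z)| ≤ π / 2 :=
    (Complex.abs_arg_lt_pi_div_two_iff.mpr (Or.inl hzre)).le
  have hargc : Complex.arg ((starRingEnd ℂ) (1 - z)) = -Complex.arg (1 - z) := by
    rw [Complex.arg_conj]
    have hpi : Complex.arg (1 - z) ≠ π := by
      intro h; rw [h, abs_of_pos Real.pi_pos] at habs
      linarith [Real.pi_pos]
    simp [hpi]
  have hconj0 : (starRingEnd ℂ) (1 - z) ≠ 0 := by
    rwa [ne_eq, map_eq_zero]
  set θ := Complex.arg (1 - z) with hθ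
  set a := ‖1 - z‖ with ha
  have ha0 : 0 < a := norm_pos_iff.mpr hz0
  rw [norm_div, norm_mul, Complex.norm_cpow_eq_rpow_re_of_pos hr,
    Complex.norm_cpow_of_ne_zero hz0, hc, Complex.norm_cpow_of_ne_zero hconj0,
    Complex.norm_conj, hargc]
  simp only [Complex.add_re, Complex.add_im, Complex.one_re, Complex.one_im, add_zero]
  have key : θ * (α.im - β.im) ≤ π / 2 * |(α - β).im| := by
    calc θ * (α.im - β.im) ≤ |θ * (α.im - β.im)| := le_abs_self _
      _ = |θ| * |(α.im - β.im)| := abs_mul _ _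
      _ ≤ π / 2 * |(α - β).im| := by
          rw [Complex.sub_im]
          exact mul_le_mul_of_nonneg_right habs (abs_nonneg _)
  have haexp : a ^ (α.re + 1) * a ^ (β.re + 1) = a ^ ((α + β).re + 2) := by
    rw [← Real.rpow_add ha0]
    congr 1
    simp [Complex.add_re]; ring
  rw [div_mul_div_comm, haexp, div_div_eq_mul_div]
  gcongr ?_ / _
  rw [mul_comm (Real.exp (π / 2 * |(α - β).im|))]
  gcongr
  rw [← Real.exp_add, Real.exp_le_exp, ← hθ]
  linarith [key]
end
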